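/- For h ∈ ℝ and q ∈ ℂ with h > |q|, the set M_{h,q} = {z ∈ ℂ³ : z·z = q, ‖z‖² = h} is a single SO(3)-orbit: for any z, w ∈ ℂ³ with z·z = q, w·w = q and ‖z‖² = ‖w‖² = h, there exists g ∈ SO(3) with g·z = w. -/

import Mathlib

/-!
Write `z = x + i y` with `x y : ℝ³`. The two equations fix the Gram matrix of `(x, y)`:
`x·x = (h + Re q)/2`, `y·y = (h - Re q)/2`, `x·y = Im q / 2`, whose determinant
`(h² - |q|²)/4` is positive, so `x, y` are independent. Gram–Schmidt turns `(x, y)` into an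
orthonormal pair `(e, f)` with coefficients depending only on the Gram matrix, and the rows
`e, f, e × f` form a rotation `R`. Then `R_wᵀ R_z` carries `Re z, Im z` to `Re w, Im w`,
hence `z` to `w`.
-/

open Matrix

section GramSchmidt

variable {n : Type*} [Fintype n]

noncomputable def unitVec (v : n → ℝ) : n → ℝ := (√(v ⬝ᵥ v))⁻¹ • v

noncomputable def perpComponent (x y : n → ℝ) : n → ℝ := y - (x ⬝ᵥ y / x ⬝ᵥ x) • x

lemma sqrt_dotProduct_self_smul_unitVec (v : n → ℝ) : √(v ⬝ᵥ v) • unitVec v = v := by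
  by_cases hv : v = 0
  · simp [hv]
  have : √(v ⬝ᵥ v) ≠ 0 := by
    rw [Real.sqrt_ne_zero']
    exact lt_of_le_of_ne (by simpa using dotProduct_star_self_nonneg v)
      (Ne.symm (dotProduct_self_eq_zero.not.2 hv))
  rw [unitVec, smul_smul, mul_inv_cancel₀ this, one_smul]

lemma unitVec_dotProduct_unitVec (v w : n → ℝ) :
    unitVec v ⬝ᵥ unitVec w = (√(v ⬝ᵥ v))⁻¹ * (√(w ⬝ᵥ w))⁻¹ * (v ⬝ᵥ w) := by
  simp only [unitVec, smul_dotProduct, dotProduct_smul, smul_eq_mul]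
  ring

lemma unitVec_dotProduct_self {v : n → ℝ} (hv : 0 < v ⬝ᵥ v) : unitVec v ⬝ᵥ unitVec v = 1 := by
  rw [unitVec_dotProduct_unitVec, ← mul_inv, Real.mul_self_sqrt hv.le, inv_mul_cancel₀ hv.ne']

lemma dotProduct_perpComponent {x : n → ℝ} (hx : x ⬝ᵥ x ≠ 0) (y : n → ℝ) :
    x ⬝ᵥ perpComponent x y = 0 := by
  rw [perpComponent, dotProduct_sub, dotProduct_smul, smul_eq_mul, div_mul_cancel₀ _ hx, sub_self]

lemma perpComponent_dotProduct_self {x : n → ℝ} (hx : x ⬝ᵥ x ≠ 0) (y : n → ℝ) :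
    perpComponent x y ⬝ᵥ perpComponent x y = y ⬝ᵥ y - (x ⬝ᵥ y) ^ 2 / x ⬝ᵥ x := by
  simp only [perpComponent, sub_dotProduct, dotProduct_sub, smul_dotProduct, dotProduct_smul,
    smul_eq_mul, dotProduct_comm y x]
  field_simp
  ring

lemma smul_add_perpComponent (x y : n → ℝ) : (x ⬝ᵥ y / x ⬝ᵥ x) • x + perpComponent x y = y :=
  add_sub_cancel _ _

lemma orthonormal_unitVec_perpComponent {x y : n → ℝ} (hxy : (x ⬝ᵥ y) ^ 2 < x ⬝ᵥ x * y ⬝ᵥ y) :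
    unitVec x ⬝ᵥ unitVec x = 1 ∧
      unitVec (perpComponent x y) ⬝ᵥ unitVec (perpComponent x y) = 1 ∧
      unitVec x ⬝ᵥ unitVec (perpComponent x y) = 0 := by
  have hx : 0 < x ⬝ᵥ x := by
    refine lt_of_le_of_ne (by simpa using dotProduct_star_self_nonneg x) fun h => ?_
    rw [← h, zero_mul] at hxy
    exact (sq_nonneg _).not_gt hxy
  have hp : 0 < perpComponent x y ⬝ᵥ perpComponent x y := by
    rw [perpComponent_dotProduct_self hx.ne', sub_pos, div_lt_iff₀ hx, mul_comm]
    exact hxy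
  refine ⟨unitVec_dotProduct_self hx, unitVec_dotProduct_self hp, ?_⟩
  rw [unitVec_dotProduct_unitVec, dotProduct_perpComponent hx.ne', mul_zero]

end GramSchmidt

def rowFrame (e f : Fin 3 → ℝ) : Matrix (Fin 3) (Fin 3) ℝ := ![e, f, e ⨯₃ f]

lemma rowFrame_mulVec (e f v : Fin 3 → ℝ) :
    rowFrame e f *ᵥ v = ![e ⬝ᵥ v, f ⬝ᵥ v, e ⨯₃ f ⬝ᵥ v] := by
  ext i; fin_cases i <;> rfl

lemma rowFrame_mem_specialOrthogonalGroup {e f : Fin 3 → ℝ} (hee : e ⬝ᵥ e = 1) (hff : f ⬝ᵥ f = 1)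
    (hef : e ⬝ᵥ f = 0) : rowFrame e f ∈ specialOrthogonalGroup (Fin 3) ℝ := by
  have hcc : e ⨯₃ f ⬝ᵥ e ⨯₃ f = 1 := by
    rw [cross_dot_cross, hee, hff, hef, dotProduct_comm f e, hef]; ring
  refine mem_specialOrthogonalGroup_iff.2 ⟨(mem_orthogonalGroup_iff _ _).2 ?_, ?_⟩
  · ext i j
    change ![e, f, e ⨯₃ f] i ⬝ᵥ ![e, f, e ⨯₃ f] j = _
    fin_cases i <;> fin_cases j <;>
      simp [one_apply, hee, hff, hef, hcc, dotProduct_comm f e, dot_self_cross,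
        dot_cross_self, dotProduct_comm (e ⨯₃ f)]
  · rw [rowFrame, ← triple_product_eq_det, triple_product_permutation,
      triple_product_permutation, hcc]

lemma exists_mem_specialOrthogonalGroup_mulVec_eq_of_orthonormal {e f e' f' : Fin 3 → ℝ}
    (hee : e ⬝ᵥ e = 1) (hff : f ⬝ᵥ f = 1) (hef : e ⬝ᵥ f = 0)
    (hee' : e' ⬝ᵥ e' = 1) (hff' : f' ⬝ᵥ f' = 1) (hef' : e' ⬝ᵥ f' = 0) :
    ∃ g ∈ specialOrthogonalGroup (Fin 3) ℝ, g *ᵥ e = e' ∧ g *ᵥ f = f' := by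
  have hR := rowFrame_mem_specialOrthogonalGroup hee hff hef
  have hR' := rowFrame_mem_specialOrthogonalGroup hee' hff' hef'
  -- Both frames send their own pair to the first two standard basis vectors.
  have he : rowFrame e f *ᵥ e = rowFrame e' f' *ᵥ e' := by
    simp only [rowFrame_mulVec, hee, hee', dotProduct_comm f, hef, dotProduct_comm f', hef',
      dotProduct_comm (e ⨯₃ f), dotProduct_comm (e' ⨯₃ f'), dot_self_cross]
  have hf : rowFrame e f *ᵥ f = rowFrame e' f' *ᵥ f' := by
    simp only [rowFrame_mulVec, hff, hff', hef, hef', dotProduct_comm (e ⨯₃ f),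
      dotProduct_comm (e' ⨯₃ f'), dot_cross_self]
  have hinv : ∀ v, (rowFrame e' f')ᵀ *ᵥ (rowFrame e' f' *ᵥ v) = v := fun v => by
    rw [mulVec_mulVec, (mem_orthogonalGroup_iff' _ _).1 hR'.1, one_mulVec]
  refine ⟨(rowFrame e' f')ᵀ * rowFrame e f, mul_mem ?_ hR, ?_, ?_⟩
  · exact mem_specialOrthogonalGroup_iff.2
      ⟨transpose_mem_unitaryGroup_iff.2 hR'.1, by rw [det_transpose]; exact hR'.2⟩
  · rw [← mulVec_mulVec, he, hinv]
  · rw [← mulVec_mulVec, hf, hinv]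

theorem exists_mem_specialOrthogonalGroup_mulVec_eq_of_gram_eq {x y u v : Fin 3 → ℝ}
    (hxy : (x ⬝ᵥ y) ^ 2 < x ⬝ᵥ x * y ⬝ᵥ y)
    (hu : u ⬝ᵥ u = x ⬝ᵥ x) (hv : v ⬝ᵥ v = y ⬝ᵥ y) (huv : u ⬝ᵥ v = x ⬝ᵥ y) :
    ∃ g ∈ specialOrthogonalGroup (Fin 3) ℝ, g *ᵥ x = u ∧ g *ᵥ y = v := by
  have huv' : (u ⬝ᵥ v) ^ 2 < u ⬝ᵥ u * v ⬝ᵥ v := by rwa [hu, hv, huv]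
  obtain ⟨hee, hff, hef⟩ := orthonormal_unitVec_perpComponent hxy
  obtain ⟨hee', hff', hef'⟩ := orthonormal_unitVec_perpComponent huv'
  obtain ⟨g, hg, hge, hgf⟩ :=
    exists_mem_specialOrthogonalGroup_mulVec_eq_of_orthonormal hee hff hef hee' hff' hef'
  have hx : x ⬝ᵥ x ≠ 0 := by
    rintro h; rw [h, zero_mul] at hxy; exact (sq_nonneg _).not_gt hxy
  have hperp :
      perpComponent u v ⬝ᵥ perpComponent u v = perpComponent x y ⬝ᵥ perpComponent x y := by
    rw [perpComponent_dotProduct_self hx, perpComponent_dotProduct_self (hu ▸ hx), hu, hv, huv]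
  have hgx : g *ᵥ x = u := by
    rw [← sqrt_dotProduct_self_smul_unitVec x, mulVec_smul, hge, ← hu,
      sqrt_dotProduct_self_smul_unitVec]
  refine ⟨g, hg, hgx, ?_⟩
  rw [← smul_add_perpComponent x y, ← sqrt_dotProduct_self_smul_unitVec (perpComponent x y),
    mulVec_add, mulVec_smul, mulVec_smul, hgx, hgf, ← hperp, sqrt_dotProduct_self_smul_unitVec,
    ← hu, ← huv, smul_add_perpComponent]

section Complexification

open Complex

variable {m n : Type*} [Fintype n]

lemma re_sum_mul_self (z : n → ℂ) :
    (∑ i, z i * z i).re = (re ∘ z) ⬝ᵥ (re ∘ z) - (im ∘ z) ⬝ᵥ (im ∘ z) := by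
  simp only [re_sum, mul_re, dotProduct, Function.comp_apply, Finset.sum_sub_distrib]

lemma im_sum_mul_self (z : n → ℂ) :
    (∑ i, z i * z i).im = 2 * ((re ∘ z) ⬝ᵥ (im ∘ z)) := by
  simp only [im_sum, mul_im, dotProduct, Function.comp_apply, Finset.mul_sum]
  exact Finset.sum_congr rfl fun i _ => by ring

lemma sum_norm_sq_eq (z : n → ℂ) :
    ∑ i, ‖z i‖ ^ 2 = (re ∘ z) ⬝ᵥ (re ∘ z) + (im ∘ z) ⬝ᵥ (im ∘ z) := by
  simp only [Complex.sq_norm, normSq_apply, dotProduct, Function.comp_apply,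
    Finset.sum_add_distrib]

lemma re_im_dotProduct_sq_lt (z : n → ℂ) (hz : ‖∑ i, z i * z i‖ < ∑ i, ‖z i‖ ^ 2) :
    ((re ∘ z) ⬝ᵥ (im ∘ z)) ^ 2 < (re ∘ z) ⬝ᵥ (re ∘ z) * (im ∘ z) ⬝ᵥ (im ∘ z) := by
  have hsq := sq_lt_sq' (by linarith [norm_nonneg (∑ i, z i * z i)]) hz
  rw [← normSq_eq_norm_sq, normSq_apply, re_sum_mul_self, im_sum_mul_self, sum_norm_sq_eq] at hsq
  nlinarith

lemma re_im_gram_of_sum_mul_self_eq {z : n → ℂ} {h : ℝ} {q : ℂ}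
    (hzq : ∑ i, z i * z i = q) (hzh : ∑ i, ‖z i‖ ^ 2 = h) :
    (re ∘ z) ⬝ᵥ (re ∘ z) = (h + q.re) / 2 ∧ (im ∘ z) ⬝ᵥ (im ∘ z) = (h - q.re) / 2 ∧
      (re ∘ z) ⬝ᵥ (im ∘ z) = q.im / 2 := by
  have hre := re_sum_mul_self z
  have him := im_sum_mul_self z
  have hnorm := sum_norm_sq_eq z
  rw [hzq] at hre him
  rw [hzh] at hnorm
  exact ⟨by linarith, by linarith, by linarith⟩

lemma re_map_ofReal_mulVec (g : Matrix m n ℝ) (z : n → ℂ) :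
    re ∘ (g.map ofReal *ᵥ z) = g *ᵥ (re ∘ z) := by
  ext i
  simp [mulVec, dotProduct, re_sum]

lemma im_map_ofReal_mulVec (g : Matrix m n ℝ) (z : n → ℂ) :
    im ∘ (g.map ofReal *ᵥ z) = g *ᵥ (im ∘ z) := by
  ext i
  simp [mulVec, dotProduct, im_sum]

end Complexification

/-- For `h > |q|`, the set `M_{h,q} = {z ∈ ℂ³ : z·z = q, ‖z‖² = h}` is a single
SO(3)-orbit. -/
theorem Mhq_single_SO3_orbit (h : ℝ) (q : ℂ) (hq : h > ‖q‖)
    (z w : Fin 3 → ℂ)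
    (hz1 : ∑ i, z i * z i = q) (hz2 : ∑ i, ‖z i‖ ^ 2 = h)
    (hw1 : ∑ i, w i * w i = q) (hw2 : ∑ i, ‖w i‖ ^ 2 = h) :
    ∃ g : Matrix (Fin 3) (Fin 3) ℝ,
      g * g.transpose = 1 ∧ g.det = 1 ∧
      (g.map (fun r => (r : ℂ))).mulVec z = w := by
  obtain ⟨hzx, hzy, hzxy⟩ := re_im_gram_of_sum_mul_self_eq hz1 hz2
  obtain ⟨hwx, hwy, hwxy⟩ := re_im_gram_of_sum_mul_self_eq hw1 hw2
  obtain ⟨g, hg, hgre, hgim⟩ := exists_mem_specialOrthogonalGroup_mulVec_eq_of_gram_eq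
    (re_im_dotProduct_sq_lt z (by rwa [hz1, hz2]))
    (hwx.trans hzx.symm) (hwy.trans hzy.symm) (hwxy.trans hzxy.symm)
  refine ⟨g, (mem_orthogonalGroup_iff _ _).1 hg.1, hg.2, funext fun i => Complex.ext ?_ ?_⟩
  · exact congrFun (re_map_ofReal_mulVec g z ▸ hgre) i
  · exact congrFun (im_map_ofReal_mulVec g z ▸ hgim) i
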